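/- If m is an integer with at most k distinct prime factors, then Ψ(m)/m ≤ Ψ(N_k)/N_k, where N_k is the product of the first k primes. -/

import Mathlib

open Finset Real Filter

/-- Dedekind psi function `Ψ(n) = n ∏_{p ∣ n} (1 + 1/p)`. -/
noncomputable def dedekindPsi (n : ℕ) : ℝ := n * ∏ p ∈ n.primeFactors, (1 + 1/(p:ℝ))

/-- `nthPrime n` is the n-th prime `p_n` (1-indexed: `nthPrime 1 = 2`). -/
noncomputable def nthPrime (n : ℕ) : ℕ := Nat.nth Nat.Prime (n - 1)

/-- `primorialN k = N_k`, the product of the first `k` primes. -/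
noncomputable def primorialN (k : ℕ) : ℕ := ∏ i ∈ Finset.range k, Nat.nth Nat.Prime i

/-! `Ψ(n)/n = ∏_{p ∣ n} (1 + 1/p)` depends only on the set of prime factors of `n`, and the factor
`1 + 1/p` decreases with `p`. The `j`-th smallest prime factor of `m` is at least the `j`-th prime,
so the product over the at most `k` prime factors of `m` is dominated by the product over the
first `k` primes, which is `Ψ(N_k)/N_k` since `N_k` is squarefree. -/

namespace Nat

variable {p q : ℕ → Prop} [DecidablePred p] [DecidablePred q]

theorem nth_count_le_of_imp (hp : (Set.ofPred p).Infinite) (hqp : ∀ k, q k → p k) {n : ℕ}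
    (hn : p n) : nth p (count q n) ≤ n :=
  calc nth p (count q n) ≤ nth p (count p n) :=
        nth_monotone hp (count_mono_left fun k _ => hqp k)
    _ = n := nth_count hn

theorem count_mem_lt_card (S : Finset ℕ) {n : ℕ} (hn : n ∈ S) : count (· ∈ S) n < S.card := by
  rw [count_eq_card_filter_range]
  refine Finset.card_lt_card ⟨fun x hx => (Finset.mem_filter.1 hx).2, fun hS => ?_⟩
  simpa using hS hn

end Nat

namespace Finset

variable {R : Type*} [CommMonoidWithZero R] [Preorder R] [ZeroLEOneClass R] [PosMulMono R]

-- An element of `S` of rank `j` (i.e. with `j` smaller elements in `S`) is at least `Nat.nth p j`.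
theorem prod_le_prod_range_nth {p : ℕ → Prop} [DecidablePred p] (hp : (Set.ofPred p).Infinite)
    {f : ℕ → R} (hf : AntitoneOn f (Set.ofPred p)) (hf1 : ∀ n, p n → 1 ≤ f n)
    {S : Finset ℕ} (hS : ∀ n ∈ S, p n) {k : ℕ} (hk : S.card ≤ k) :
    ∏ n ∈ S, f n ≤ ∏ i ∈ range k, f (Nat.nth p i) := by
  have hf0 : ∀ n, p n → 0 ≤ f n := fun n hn => zero_le_one.trans (hf1 n hn)
  have hrank : ∀ n ∈ S, p (Nat.nth p (Nat.count (· ∈ S) n)) :=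
    fun _ _ => Nat.nth_mem_of_infinite hp _
  calc ∏ n ∈ S, f n ≤ ∏ n ∈ S, f (Nat.nth p (Nat.count (· ∈ S) n)) :=
        prod_le_prod (fun n hn => hf0 n (hS n hn)) fun n hn =>
          hf (hrank n hn) (hS n hn) (Nat.nth_count_le_of_imp hp hS (hS n hn))
    _ = ∏ i ∈ S.image (Nat.count (· ∈ S)), f (Nat.nth p i) :=
        (prod_image (f := fun i => f (Nat.nth p i)) fun a ha b hb =>
          Nat.count_injective (p := (· ∈ S)) ha hb).symm
    _ ≤ ∏ i ∈ range k, f (Nat.nth p i) := by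
        refine prod_le_prod_of_subset_of_one_le ?_
          (fun i _ => hf0 _ (Nat.nth_mem_of_infinite hp i))
          fun i _ _ => hf1 _ (Nat.nth_mem_of_infinite hp i)
        intro i hi
        obtain ⟨n, hn, rfl⟩ := mem_image.1 hi
        exact mem_range.2 ((Nat.count_mem_lt_card S hn).trans_le hk)

end Finset

theorem antitoneOn_one_add_one_div :
    AntitoneOn (fun n : ℕ => 1 + 1 / (n : ℝ)) (Set.Ioi 0) := fun a ha b _ hab => by
  have : (0 : ℝ) < a := by exact_mod_cast ha
  dsimp only
  gcongr

theorem dedekindPsi_div_self_le (n : ℕ) :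
    dedekindPsi n / n ≤ ∏ p ∈ n.primeFactors, (1 + 1 / (p : ℝ)) := by
  rcases eq_or_ne n 0 with rfl | hn
  · simp
  · rw [dedekindPsi, mul_div_cancel_left₀ _ (Nat.cast_ne_zero.2 hn)]

theorem primorialN_pos (k : ℕ) : 0 < primorialN k :=
  Finset.prod_pos fun i _ => (Nat.prime_nth_prime i).pos

theorem primeFactors_primorialN (k : ℕ) :
    (primorialN k).primeFactors = (range k).image (Nat.nth Nat.Prime) := by
  have h := Nat.primeFactors_prod (s := (range k).image (Nat.nth Nat.Prime)) fun p hp => by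
    obtain ⟨i, -, rfl⟩ := mem_image.1 hp
    exact Nat.prime_nth_prime i
  rwa [prod_image (Nat.nth_injective Nat.infinite_setOfPred_prime).injOn] at h

theorem dedekindPsi_primorialN_div (k : ℕ) :
    dedekindPsi (primorialN k) / primorialN k
      = ∏ i ∈ range k, (1 + 1 / (Nat.nth Nat.Prime i : ℝ)) := by
  rw [dedekindPsi, mul_div_cancel_left₀ _ (Nat.cast_ne_zero.2 (primorialN_pos k).ne'),
    primeFactors_primorialN, prod_image (Nat.nth_injective Nat.infinite_setOfPred_prime).injOn]

theorem psi_ratio_le_primorialN_general (m k : ℕ)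
    (h : m.primeFactors.card ≤ k) :
    dedekindPsi m / m ≤ dedekindPsi (primorialN k) / primorialN k :=
  calc dedekindPsi m / m ≤ ∏ p ∈ m.primeFactors, (1 + 1 / (p : ℝ)) := dedekindPsi_div_self_le m
    _ ≤ ∏ i ∈ range k, (1 + 1 / (Nat.nth Nat.Prime i : ℝ)) :=
        prod_le_prod_range_nth Nat.infinite_setOfPred_prime
          (antitoneOn_one_add_one_div.mono fun _ hp => hp.pos)
          (fun _ _ => le_add_of_nonneg_right (by positivity))
          (fun _ hp => Nat.prime_of_mem_primeFactors hp) h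
    _ = dedekindPsi (primorialN k) / primorialN k := (dedekindPsi_primorialN_div k).symm

theorem psi_ratio_le_primorialN (m k : ℕ) (hm : 0 < m)
    (h : m.primeFactors.card ≤ k) :
    dedekindPsi m / m ≤ dedekindPsi (primorialN k) / primorialN k :=
  psi_ratio_le_primorialN_general m k h
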